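/- For every integer n ≥ 2 and all smooth compactly supported functions u, τ : ℝⁿ → ℝ, the Wess–Zumino functional equals twice the difference of Einstein–Hilbert actions at the two ends of the conformal path: Γ_WZ(τ,u) := ∫₀¹ A(−2τ, u − tτ) dt = 2·( S(u − τ) − S(u) ). (This is the identity ½ Γ_WZ(τ,g) = S_EH(σ^{−2} g) − S_EH(g) with dilaton σ = e^{τ}, for the conformally flat metric g_u = e^{2u}δ.) -/

import Mathlib

open MeasureTheory Real

noncomputable section

/-- Coordinate partial derivative `∂ᵢ f x` on `ℝⁿ = EuclideanSpace ℝ (Fin n)`. -/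
def pd (n : ℕ) (f : EuclideanSpace ℝ (Fin n) → ℝ) (i : Fin n)
    (x : EuclideanSpace ℝ (Fin n)) : ℝ :=
  fderiv ℝ f x (EuclideanSpace.single i 1)

/-- Second coordinate partial derivative `∂ᵢ∂ᵢ f x`. -/
def pd2 (n : ℕ) (f : EuclideanSpace ℝ (Fin n) → ℝ) (i : Fin n)
    (x : EuclideanSpace ℝ (Fin n)) : ℝ :=
  pd n (pd n f i) i x

/-- Scalar curvature expression of the conformally flat metric `g_v = e^{2v} δ`:
`R(v) = e^{−2v} ( −2(n−1) Σᵢ ∂ᵢ∂ᵢ v − (n−1)(n−2) Σᵢ (∂ᵢ v)² )`. -/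
def Rscal (n : ℕ) (v : EuclideanSpace ℝ (Fin n) → ℝ)
    (x : EuclideanSpace ℝ (Fin n)) : ℝ :=
  Real.exp (-2 * v x) *
    (-2 * ((n : ℝ) - 1) * ∑ i, pd2 n v i x
      - ((n : ℝ) - 1) * ((n : ℝ) - 2) * ∑ i, (pd n v i x) ^ 2)

/-- Laplacian of `g_v` acting on `f`:
`Δ_v f = −e^{−2v} ( Σᵢ ∂ᵢ∂ᵢ f + (n−2) Σᵢ ∂ᵢ v ∂ᵢ f )`. -/
def lap (n : ℕ) (v f : EuclideanSpace ℝ (Fin n) → ℝ)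
    (x : EuclideanSpace ℝ (Fin n)) : ℝ :=
  -Real.exp (-2 * v x) *
    (∑ i, pd2 n f i x + ((n : ℝ) - 2) * ∑ i, pd n v i x * pd n f i x)

/-- Gradient square `|∇f|²_v = e^{−2v} Σᵢ (∂ᵢ f)²`. -/
def gradSq (n : ℕ) (v f : EuclideanSpace ℝ (Fin n) → ℝ)
    (x : EuclideanSpace ℝ (Fin n)) : ℝ :=
  Real.exp (-2 * v x) * ∑ i, (pd n f i x) ^ 2

/-- Einstein–Hilbert action `S(u) = ∫ e^{nu} R(u) dx`. -/
def SEH (n : ℕ) (u : EuclideanSpace ℝ (Fin n) → ℝ) : ℝ :=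
  ∫ x, Real.exp ((n : ℝ) * u x) * Rscal n u x

/-- Anomaly functional
`A(φ,u) = ∫ e^{nu} ( (n−2) φ R(u) + 2(n−1) Δ_u φ ) dx`. -/
def anomaly (n : ℕ) (φ u : EuclideanSpace ℝ (Fin n) → ℝ) : ℝ :=
  ∫ x, Real.exp ((n : ℝ) * u x) *
    (((n : ℝ) - 2) * φ x * Rscal n u x + 2 * ((n : ℝ) - 1) * lap n u φ x)

/-- Wess–Zumino functional `Γ_WZ(τ,u) = ∫₀¹ A(−2τ, u − tτ) dt`. -/
def WZ (n : ℕ) (τ u : EuclideanSpace ℝ (Fin n) → ℝ) : ℝ :=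
  ∫ t in (0 : ℝ)..1,
    anomaly n (fun y => -2 * τ y) (fun y => u y - t * τ y)

/-- Closed-form `t`-derivative of the Einstein–Hilbert integrand along the path
`t ↦ u - t τ`. -/
def Dfun (n : ℕ) (u τ : EuclideanSpace ℝ (Fin n) → ℝ) (t : ℝ)
    (x : EuclideanSpace ℝ (Fin n)) : ℝ :=
  Real.exp ((n : ℝ) * (u x - t * τ x)) * Real.exp (-2 * (u x - t * τ x)) *
    (-((n : ℝ) - 2) * τ x *
        (-2 * ((n : ℝ) - 1) * ((∑ i, pd2 n u i x) - t * ∑ i, pd2 n τ i x)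
          - ((n : ℝ) - 1) * ((n : ℝ) - 2) *
            ((∑ i, (pd n u i x) ^ 2) - 2 * t * (∑ i, pd n u i x * pd n τ i x)
              + t ^ 2 * ∑ i, (pd n τ i x) ^ 2))
      + 2 * ((n : ℝ) - 1) * (∑ i, pd2 n τ i x)
      + 2 * ((n : ℝ) - 1) * ((n : ℝ) - 2) *
          ((∑ i, pd n u i x * pd n τ i x) - t * ∑ i, (pd n τ i x) ^ 2))

section Helpers

variable {n : ℕ} {f g u τ : EuclideanSpace ℝ (Fin n) → ℝ}

lemma contDiff_pd (hf : ContDiff ℝ (⊤ : ℕ∞) f) (i : Fin n) : ContDiff ℝ (⊤ : ℕ∞) (pd n f i) :=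
  (hf.fderiv_right (by simp)).clm_apply contDiff_const

lemma contDiff_pd2 (hf : ContDiff ℝ (⊤ : ℕ∞) f) (i : Fin n) : ContDiff ℝ (⊤ : ℕ∞) (pd2 n f i) :=
  contDiff_pd (contDiff_pd hf i) i

lemma pd_comb (hf : ContDiff ℝ (⊤ : ℕ∞) f) (hg : ContDiff ℝ (⊤ : ℕ∞) g) (t : ℝ) (i : Fin n)
    (x : EuclideanSpace ℝ (Fin n)) :
    pd n (fun y => f y - t * g y) i x = pd n f i x - t * pd n g i x := by
  unfold pd
  rw [fderiv_fun_sub ((hf.differentiable (by simp)) x)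
    (((hg.differentiable (by simp)) x).const_mul t), fderiv_const_mul ((hg.differentiable (by simp)) x)]
  simp

lemma pd_cmul (hg : ContDiff ℝ (⊤ : ℕ∞) g) (c : ℝ) (i : Fin n) (x : EuclideanSpace ℝ (Fin n)) :
    pd n (fun y => c * g y) i x = c * pd n g i x := by
  unfold pd
  rw [fderiv_const_mul ((hg.differentiable (by simp)) x)]
  simp

lemma pd2_comb (hf : ContDiff ℝ (⊤ : ℕ∞) f) (hg : ContDiff ℝ (⊤ : ℕ∞) g) (t : ℝ) (i : Fin n)
    (x : EuclideanSpace ℝ (Fin n)) :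
    pd2 n (fun y => f y - t * g y) i x = pd2 n f i x - t * pd2 n g i x := by
  unfold pd2
  have h : pd n (fun y => f y - t * g y) i = fun y => pd n f i y - t * pd n g i y :=
    funext fun y => pd_comb hf hg t i y
  rw [h]
  exact pd_comb (contDiff_pd hf i) (contDiff_pd hg i) t i x

lemma pd2_cmul (hg : ContDiff ℝ (⊤ : ℕ∞) g) (c : ℝ) (i : Fin n) (x : EuclideanSpace ℝ (Fin n)) :
    pd2 n (fun y => c * g y) i x = c * pd2 n g i x := by
  unfold pd2
  have h : pd n (fun y => c * g y) i = fun y => c * pd n g i y :=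
    funext fun y => pd_cmul hg c i y
  rw [h]
  exact pd_cmul (contDiff_pd hg i) c i x

lemma pd_zero_of_nmem (i : Fin n) {x : EuclideanSpace ℝ (Fin n)} (hx : x ∉ tsupport f) :
    pd n f i x = 0 := by
  unfold pd
  rw [fderiv_of_notMem_tsupport ℝ hx]
  simp

lemma tsupport_pd_subset (i : Fin n) : tsupport (pd n f i) ⊆ tsupport f := by
  refine closure_minimal ?_ isClosed_closure
  intro x hx
  refine support_fderiv_subset ℝ (f := f) ?_
  intro h
  exact hx (by simp [pd, h])

lemma pd2_zero_of_nmem (i : Fin n) {x : EuclideanSpace ℝ (Fin n)} (hx : x ∉ tsupport f) :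
    pd2 n f i x = 0 :=
  pd_zero_of_nmem i (fun h => hx (tsupport_pd_subset i h))

/-- The path scalar curvature in closed form. -/
lemma Rscal_path (hu : ContDiff ℝ (⊤ : ℕ∞) u) (hτ : ContDiff ℝ (⊤ : ℕ∞) τ) (t : ℝ)
    (x : EuclideanSpace ℝ (Fin n)) :
    Rscal n (fun y => u y - t * τ y) x =
      Real.exp (-2 * (u x - t * τ x)) *
        (-2 * ((n : ℝ) - 1) * ∑ i, (pd2 n u i x - t * pd2 n τ i x)
          - ((n : ℝ) - 1) * ((n : ℝ) - 2) * ∑ i, (pd n u i x - t * pd n τ i x) ^ 2) := by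
  simp only [Rscal, pd_comb hu hτ, pd2_comb hu hτ]

lemma lap_path (hu : ContDiff ℝ (⊤ : ℕ∞) u) (hτ : ContDiff ℝ (⊤ : ℕ∞) τ) (t : ℝ)
    (x : EuclideanSpace ℝ (Fin n)) :
    lap n (fun y => u y - t * τ y) (fun y => -2 * τ y) x =
      -Real.exp (-2 * (u x - t * τ x)) *
        (∑ i, (-2 * pd2 n τ i x)
          + ((n : ℝ) - 2) * ∑ i, (pd n u i x - t * pd n τ i x) * (-2 * pd n τ i x)) := by
  simp only [lap, pd_comb hu hτ, pd2_comb hu hτ, pd_cmul hτ, pd2_cmul hτ]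

lemma sum_sub_eq (a b : Fin n → ℝ) (t : ℝ) :
    ∑ i, (a i - t * b i) = (∑ i, a i) - t * ∑ i, b i := by
  rw [Finset.sum_sub_distrib, Finset.mul_sum]

lemma sum_sq_eq (a b : Fin n → ℝ) (t : ℝ) :
    ∑ i, (a i - t * b i) ^ 2 =
      (∑ i, (a i) ^ 2) - 2 * t * (∑ i, a i * b i) + t ^ 2 * ∑ i, (b i) ^ 2 := by
  have h : ∀ i : Fin n, (a i - t * b i) ^ 2
      = (a i) ^ 2 - 2 * t * (a i * b i) + t ^ 2 * (b i) ^ 2 := fun i => by ring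
  simp_rw [h, Finset.sum_add_distrib, Finset.sum_sub_distrib, ← Finset.mul_sum]

lemma sum_lapterm_eq (a b : Fin n → ℝ) (t : ℝ) :
    ∑ i, (a i - t * b i) * (-2 * b i) =
      -2 * (∑ i, a i * b i) + 2 * t * ∑ i, (b i) ^ 2 := by
  have h : ∀ i : Fin n, (a i - t * b i) * (-2 * b i)
      = -2 * (a i * b i) + 2 * t * (b i) ^ 2 := fun i => by ring
  simp_rw [h, Finset.sum_add_distrib, ← Finset.mul_sum]

lemma sum_neg2_eq (b : Fin n → ℝ) : ∑ i, (-2 * b i) = -2 * ∑ i, b i := by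
  rw [← Finset.mul_sum]

/-- The anomaly integrand equals twice `Dfun`. -/
lemma AI_eq (hu : ContDiff ℝ (⊤ : ℕ∞) u) (hτ : ContDiff ℝ (⊤ : ℕ∞) τ) (t : ℝ)
    (x : EuclideanSpace ℝ (Fin n)) :
    Real.exp ((n : ℝ) * (u x - t * τ x)) *
      (((n : ℝ) - 2) * (-2 * τ x) * Rscal n (fun y => u y - t * τ y) x
        + 2 * ((n : ℝ) - 1) * lap n (fun y => u y - t * τ y) (fun y => -2 * τ y) x)
      = 2 * Dfun n u τ t x := by
  rw [Rscal_path hu hτ, lap_path hu hτ, sum_sub_eq, sum_sq_eq, sum_lapterm_eq, sum_neg2_eq]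
  unfold Dfun
  ring

/-- The EH integrand along the path has `t`-derivative `Dfun`. -/
lemma hasDerivAt_EH (hu : ContDiff ℝ (⊤ : ℕ∞) u) (hτ : ContDiff ℝ (⊤ : ℕ∞) τ) (t : ℝ)
    (x : EuclideanSpace ℝ (Fin n)) :
    HasDerivAt
      (fun s => Real.exp ((n : ℝ) * (u x - s * τ x)) * Rscal n (fun y => u y - s * τ y) x)
      (Dfun n u τ t x) t := by
  have hfe : (fun s => Real.exp ((n : ℝ) * (u x - s * τ x))
        * Rscal n (fun y => u y - s * τ y) x)
      = fun s => Real.exp ((n : ℝ) * (u x - s * τ x)) *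
        (Real.exp (-2 * (u x - s * τ x)) *
          (-2 * ((n : ℝ) - 1) * ∑ i, (pd2 n u i x - s * pd2 n τ i x)
            - ((n : ℝ) - 1) * ((n : ℝ) - 2) * ∑ i, (pd n u i x - s * pd n τ i x) ^ 2)) :=
    funext fun s => by rw [Rscal_path hu hτ]
  rw [hfe]
  have h0 : HasDerivAt (fun s : ℝ => u x - s * τ x) (-τ x) t := by
    simpa using (hasDerivAt_mul_const (τ x)).const_sub (u x)
  have h1 : HasDerivAt (fun s : ℝ => Real.exp ((n : ℝ) * (u x - s * τ x)))
      (Real.exp ((n : ℝ) * (u x - t * τ x)) * ((n : ℝ) * -τ x)) t :=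
    (h0.const_mul ((n : ℝ))).exp
  have h2 : HasDerivAt (fun s : ℝ => Real.exp (-2 * (u x - s * τ x)))
      (Real.exp (-2 * (u x - t * τ x)) * (-2 * -τ x)) t :=
    (h0.const_mul (-2 : ℝ)).exp
  have hA : HasDerivAt (fun s : ℝ => ∑ i, (pd2 n u i x - s * pd2 n τ i x))
      (∑ i : Fin n, -pd2 n τ i x) t :=
    HasDerivAt.fun_sum fun i _ => (hasDerivAt_mul_const (pd2 n τ i x)).const_sub (pd2 n u i x)
  have hS : HasDerivAt (fun s : ℝ => ∑ i, (pd n u i x - s * pd n τ i x) ^ 2)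
      (∑ i : Fin n, ((2 : ℕ) : ℝ) * (pd n u i x - t * pd n τ i x) ^ (2 - 1) * -pd n τ i x) t :=
    HasDerivAt.fun_sum fun i _ =>
      ((hasDerivAt_mul_const (pd n τ i x)).const_sub (pd n u i x)).pow 2
  have hQ := (hA.const_mul (-2 * ((n : ℝ) - 1))).sub
    (hS.const_mul (((n : ℝ) - 1) * ((n : ℝ) - 2)))
  have hfull := h1.mul (h2.mul hQ)
  convert hfull using 1
  case e'_4 => rfl
  case e'_5 => rfl
  case e'_8 => rfl
  have e1 : ∑ i : Fin n, -pd2 n τ i x = -(∑ i, pd2 n τ i x) := by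
    rw [Finset.sum_neg_distrib]
  have e2 : ∑ i : Fin n, ((2 : ℕ) : ℝ) * (pd n u i x - t * pd n τ i x) ^ (2 - 1) * -pd n τ i x
      = -2 * (∑ i, pd n u i x * pd n τ i x) + 2 * t * ∑ i, (pd n τ i x) ^ 2 := by
    have h : ∀ i : Fin n, ((2 : ℕ) : ℝ) * (pd n u i x - t * pd n τ i x) ^ (2 - 1) * -pd n τ i x
        = -2 * (pd n u i x * pd n τ i x) + 2 * t * (pd n τ i x) ^ 2 := fun i => by
      push_cast
      ring
    simp_rw [h, Finset.sum_add_distrib, ← Finset.mul_sum]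
  simp only [Pi.mul_apply, Pi.sub_apply]
  rw [e1, e2, sum_sub_eq, sum_sq_eq]
  unfold Dfun
  ring

lemma Dfun_zero (t : ℝ) {x : EuclideanSpace ℝ (Fin n)}
    (hx : x ∉ tsupport u ∪ tsupport τ) : Dfun n u τ t x = 0 := by
  have hxτ : x ∉ tsupport τ := fun h => hx (Set.mem_union_right _ h)
  have hτx : τ x = 0 := image_eq_zero_of_notMem_tsupport hxτ
  have h1 : ∀ i : Fin n, pd n τ i x = 0 := fun i => pd_zero_of_nmem i hxτ
  have h2 : ∀ i : Fin n, pd2 n τ i x = 0 := fun i => pd2_zero_of_nmem i hxτ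
  unfold Dfun
  simp [hτx, h1, h2]

lemma continuous_Dfun (hu : ContDiff ℝ (⊤ : ℕ∞) u) (hτ : ContDiff ℝ (⊤ : ℕ∞) τ) :
    Continuous (fun p : ℝ × EuclideanSpace ℝ (Fin n) => Dfun n u τ p.1 p.2) := by
  have cu : Continuous fun p : ℝ × EuclideanSpace ℝ (Fin n) => u p.2 :=
    hu.continuous.comp continuous_snd
  have cτ : Continuous fun p : ℝ × EuclideanSpace ℝ (Fin n) => τ p.2 :=
    hτ.continuous.comp continuous_snd
  have cw : Continuous fun p : ℝ × EuclideanSpace ℝ (Fin n) => u p.2 - p.1 * τ p.2 :=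
    cu.sub (continuous_fst.mul cτ)
  have cA : Continuous fun p : ℝ × EuclideanSpace ℝ (Fin n) => ∑ i, pd2 n u i p.2 :=
    (continuous_finset_sum _ fun i _ => (contDiff_pd2 hu i).continuous).comp continuous_snd
  have cB : Continuous fun p : ℝ × EuclideanSpace ℝ (Fin n) => ∑ i, pd2 n τ i p.2 :=
    (continuous_finset_sum _ fun i _ => (contDiff_pd2 hτ i).continuous).comp continuous_snd
  have cSa : Continuous fun p : ℝ × EuclideanSpace ℝ (Fin n) => ∑ i, (pd n u i p.2) ^ 2 :=
    (continuous_finset_sum _ fun i _ => ((contDiff_pd hu i).continuous).pow 2).comp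
      continuous_snd
  have cSb : Continuous fun p : ℝ × EuclideanSpace ℝ (Fin n) => ∑ i, (pd n τ i p.2) ^ 2 :=
    (continuous_finset_sum _ fun i _ => ((contDiff_pd hτ i).continuous).pow 2).comp
      continuous_snd
  have cSab : Continuous fun p : ℝ × EuclideanSpace ℝ (Fin n) =>
      ∑ i, pd n u i p.2 * pd n τ i p.2 :=
    (continuous_finset_sum _ fun i _ =>
      ((contDiff_pd hu i).continuous).mul ((contDiff_pd hτ i).continuous)).comp continuous_snd
  unfold Dfun
  exact ((continuous_const.mul cw).rexp.mul (continuous_const.mul cw).rexp).mul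
    ((((continuous_const.mul cτ).mul
      ((continuous_const.mul (cA.sub (continuous_fst.mul cB))).sub
        (continuous_const.mul
          ((cSa.sub ((continuous_const.mul continuous_fst).mul cSab)).add
            ((continuous_fst.pow 2).mul cSb))))).add
      (continuous_const.mul cB)).add
      (continuous_const.mul (cSab.sub (continuous_fst.mul cSb))))

/-- Continuity of the EH integrand. -/
lemma continuous_EHint (hv : ContDiff ℝ (⊤ : ℕ∞) f) :
    Continuous (fun x => Real.exp ((n : ℝ) * f x) * Rscal n f x) := by
  have cR : Continuous (Rscal n f) := by
    unfold Rscal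
    exact (continuous_const.mul hv.continuous).rexp.mul
      (((continuous_const.mul
        (continuous_finset_sum _ fun i _ => (contDiff_pd2 hv i).continuous))).sub
        (continuous_const.mul
          (continuous_finset_sum _ fun i _ => ((contDiff_pd hv i).continuous).pow 2)))
  exact (continuous_const.mul hv.continuous).rexp.mul cR

lemma EHint_zero {x : EuclideanSpace ℝ (Fin n)} (hx : x ∉ tsupport f) :
    Real.exp ((n : ℝ) * f x) * Rscal n f x = 0 := by
  have h1 : ∀ i : Fin n, pd n f i x = 0 := fun i => pd_zero_of_nmem i hx
  have h2 : ∀ i : Fin n, pd2 n f i x = 0 := fun i => pd2_zero_of_nmem i hx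
  unfold Rscal
  simp [h1, h2]

end Helpers

set_option maxHeartbeats 2000000 in
/-- The Wess–Zumino functional is twice the difference of Einstein–Hilbert
actions at the two ends of the conformal path:
`½ Γ_WZ(τ,g) = S_EH(σ^{−2} g) − S_EH(g)` with `σ = e^τ`. -/
theorem wess_zumino_functional_eq_difference_of_EH
    (n : ℕ) (hn : 2 ≤ n)
    (u τ : EuclideanSpace ℝ (Fin n) → ℝ)
    (hu : ContDiff ℝ (⊤ : ℕ∞) u) (hτ : ContDiff ℝ (⊤ : ℕ∞) τ)
    (hcu : HasCompactSupport u) (hcτ : HasCompactSupport τ) :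
    WZ n τ u = 2 * (SEH n (fun y => u y - τ y) - SEH n u) := by
  classical
  set K : Set (EuclideanSpace ℝ (Fin n)) := tsupport u ∪ tsupport τ with hKdef
  have hKc : IsCompact K := hcu.union hcτ
  have hKcl : IsClosed K := (isClosed_tsupport u).union (isClosed_tsupport τ)
  have hcontD : Continuous (fun p : ℝ × EuclideanSpace ℝ (Fin n) => Dfun n u τ p.1 p.2) :=
    continuous_Dfun hu hτ
  -- Step 1: the anomaly integrand equals `2 * Dfun`.
  have h1 : WZ n τ u = ∫ t in (0 : ℝ)..1, ∫ x, 2 * Dfun n u τ t x := by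
    unfold WZ anomaly
    refine intervalIntegral.integral_congr fun t _ => ?_
    refine integral_congr_ae (Filter.Eventually.of_forall fun x => ?_)
    exact AI_eq hu hτ t x
  -- Step 2: Fubini.
  have hintH : Integrable (Function.uncurry fun t x => 2 * Dfun n u τ t x)
      ((volume.restrict (Set.Ioc (0 : ℝ) 1)).prod volume) := by
    rw [Measure.restrict_prod_eq_prod_univ]
    have hIcc : IntegrableOn (Function.uncurry fun t x => 2 * Dfun n u τ t x)
        (Set.Icc (0 : ℝ) 1 ×ˢ K) (volume.prod volume) :=
      ContinuousOn.integrableOn_compact (isCompact_Icc.prod hKc)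
        (continuous_const.mul hcontD).continuousOn
    have hind : Integrable ((Set.Icc (0 : ℝ) 1 ×ˢ K).indicator
        (Function.uncurry fun t x => 2 * Dfun n u τ t x)) (volume.prod volume) :=
      (integrable_indicator_iff (measurableSet_Icc.prod hKcl.measurableSet)).mpr hIcc
    refine IntegrableOn.congr_fun hind.integrableOn ?_
      (measurableSet_Ioc.prod MeasurableSet.univ)
    intro p hp
    by_cases hpK : p ∈ Set.Icc (0 : ℝ) 1 ×ˢ K
    · rw [Set.indicator_of_mem hpK]
    · rw [Set.indicator_of_notMem hpK]
      have hp2 : p.2 ∉ K := fun h => hpK ⟨Set.Ioc_subset_Icc_self hp.1, h⟩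
      show (0 : ℝ) = 2 * Dfun n u τ p.1 p.2
      rw [Dfun_zero p.1 hp2]
      ring
  have hswap : (∫ t in (0 : ℝ)..1, ∫ x, 2 * Dfun n u τ t x)
      = ∫ x, ∫ t in (0 : ℝ)..1, 2 * Dfun n u τ t x := by
    rw [intervalIntegral.integral_of_le (zero_le_one)]
    have h := MeasureTheory.integral_integral_swap hintH
    simp only [intervalIntegral.integral_of_le (zero_le_one)]
    exact h
  -- Step 3: FTC in `t` for each `x`.
  have hFTC : ∀ x : EuclideanSpace ℝ (Fin n), (∫ t in (0 : ℝ)..1, 2 * Dfun n u τ t x)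
      = 2 * (Real.exp ((n : ℝ) * (u x - 1 * τ x)) * Rscal n (fun y => u y - 1 * τ y) x)
        - 2 * (Real.exp ((n : ℝ) * (u x - 0 * τ x)) * Rscal n (fun y => u y - 0 * τ y) x) := by
    intro x
    have hderiv : ∀ t ∈ Set.uIcc (0 : ℝ) 1, HasDerivAt
        (fun s => 2 * (Real.exp ((n : ℝ) * (u x - s * τ x))
          * Rscal n (fun y => u y - s * τ y) x))
        (2 * Dfun n u τ t x) t := fun t _ => (hasDerivAt_EH hu hτ t x).const_mul 2
    have hcont0 : Continuous fun t : ℝ => Dfun n u τ t x :=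
      Continuous.uncurry_right x hcontD
    have hcont : Continuous fun t => 2 * Dfun n u τ t x := continuous_const.mul hcont0
    have hint : IntervalIntegrable (fun t => 2 * Dfun n u τ t x) volume 0 1 :=
      hcont.intervalIntegrable 0 1
    simpa using intervalIntegral.integral_eq_sub_of_hasDerivAt hderiv hint
  -- Step 4: endpoint simplification.
  have h1fun : (fun y => u y - (1 : ℝ) * τ y) = fun y => u y - τ y :=
    funext fun y => by ring
  have h0fun : (fun y => u y - (0 : ℝ) * τ y) = u := funext fun y => by ring
  -- Step 5: integrability of the endpoint integrands.
  have hEHint : ∀ v : EuclideanSpace ℝ (Fin n) → ℝ, ContDiff ℝ (⊤ : ℕ∞) v → tsupport v ⊆ K →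
      Integrable (fun x => Real.exp ((n : ℝ) * v x) * Rscal n v x) volume := by
    intro v hv hsv
    refine (continuous_EHint hv).integrable_of_hasCompactSupport ?_
    refine HasCompactSupport.intro hKc fun x hx => ?_
    exact EHint_zero (fun h => hx (hsv h))
  have hsub : tsupport (fun y => u y - τ y) ⊆ K := by
    refine closure_minimal ?_ hKcl
    intro x hx
    by_contra hxK
    have hxu : u x = 0 := image_eq_zero_of_notMem_tsupport fun h => hxK (Set.mem_union_left _ h)
    have hxτ : τ x = 0 := image_eq_zero_of_notMem_tsupport fun h => hxK (Set.mem_union_right _ h)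
    exact hx (by simp [hxu, hxτ])
  have hi1 : Integrable (fun x => Real.exp ((n : ℝ) * (u x - τ x))
      * Rscal n (fun y => u y - τ y) x) volume :=
    hEHint (fun y => u y - τ y) (hu.sub hτ) hsub
  have hi0 : Integrable (fun x => Real.exp ((n : ℝ) * u x) * Rscal n u x) volume :=
    hEHint u hu (fun {x} h => Set.mem_union_left _ h)
  -- Assemble.
  calc WZ n τ u
      = ∫ x, (2 * (Real.exp ((n : ℝ) * (u x - τ x)) * Rscal n (fun y => u y - τ y) x)
          - 2 * (Real.exp ((n : ℝ) * u x) * Rscal n u x)) := by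
        rw [h1, hswap]
        refine integral_congr_ae (Filter.Eventually.of_forall fun x => ?_)
        simp only [hFTC x, h1fun, h0fun, one_mul, zero_mul, sub_zero]
    _ = 2 * ((∫ x, Real.exp ((n : ℝ) * (u x - τ x)) * Rscal n (fun y => u y - τ y) x)
          - ∫ x, Real.exp ((n : ℝ) * u x) * Rscal n u x) := by
        rw [integral_sub (hi1.const_mul 2) (hi0.const_mul 2),
          integral_const_mul, integral_const_mul]
        ring
    _ = 2 * (SEH n (fun y => u y - τ y) - SEH n u) := by simp only [SEH]
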